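/- Define H̃ : [0,1] → ℝ by H̃(x) = x⁴ − 2x³ + x² − 1/30. Then for all x ∈ ℝ and all integers n ≥ 4, |∑_{i=0}^{n−1} H̃({x + i/n})| < 1/12, where {·} denotes the fractional part (equivalently, viewing H̃ as a function H on 𝕋 via H̃(0)=H̃(1), the sum ∑_{i=0}^{n−1} H(x + i/n) over the torus has absolute value < 1/12). -/

import Mathlib

noncomputable def Htilde (x : ℝ) : ℝ := x ^ 4 - 2 * x ^ 3 + x ^ 2 - 1 / 30

private lemma pow1 (n : ℕ) : ∑ j ∈ Finset.range n, (j : ℝ) = n * (n - 1) / 2 := by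
  induction n with
  | zero => simp
  | succ m ih => rw [Finset.sum_range_succ, ih]; push_cast; ring

private lemma pow2 (n : ℕ) : ∑ j ∈ Finset.range n, (j : ℝ) ^ 2
    = n * (n - 1) * (2 * n - 1) / 6 := by
  induction n with
  | zero => simp
  | succ m ih => rw [Finset.sum_range_succ, ih]; push_cast; ring

private lemma pow3 (n : ℕ) : ∑ j ∈ Finset.range n, (j : ℝ) ^ 3
    = (n * (n - 1) / 2) ^ 2 := by
  induction n with
  | zero => simp
  | succ m ih => rw [Finset.sum_range_succ, ih]; push_cast; ring

private lemma pow4 (n : ℕ) : ∑ j ∈ Finset.range n, (j : ℝ) ^ 4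
    = n * (n - 1) * (2 * n - 1) * (3 * n ^ 2 - 3 * n - 1) / 30 := by
  induction n with
  | zero => simp
  | succ m ih => rw [Finset.sum_range_succ, ih]; push_cast; ring

private lemma keysum (n : ℕ) (hn : 0 < n) (y : ℝ) :
    ∑ j ∈ Finset.range n, Htilde (y + j / n) = Htilde (n * y) / n ^ 3 := by
  have hn0 : (n : ℝ) ≠ 0 := Nat.cast_ne_zero.mpr hn.ne'
  have key : ∀ j : ℕ, Htilde (y + j / n)
      = (y ^ 4 - 2 * y ^ 3 + y ^ 2 - 1 / 30)
        + (4 * y ^ 3 - 6 * y ^ 2 + 2 * y) / n * j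
        + (6 * y ^ 2 - 6 * y + 1) / n ^ 2 * (j : ℝ) ^ 2
        + (4 * y - 2) / n ^ 3 * (j : ℝ) ^ 3
        + 1 / n ^ 4 * (j : ℝ) ^ 4 := by
    intro j; unfold Htilde; field_simp; ring
  simp_rw [key, Finset.sum_add_distrib, ← Finset.mul_sum, pow1, pow2, pow3, pow4,
    Finset.sum_const, Finset.card_range, nsmul_eq_mul]
  unfold Htilde
  field_simp
  ring

private lemma habs (t : ℝ) (h0 : 0 ≤ t) (h1 : t ≤ 1) : |Htilde t| ≤ 1 / 16 := by
  unfold Htilde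
  rw [abs_le]
  constructor
  · nlinarith [sq_nonneg (t * (1 - t))]
  · have hu0 : 0 ≤ t * (1 - t) := mul_nonneg h0 (by linarith)
    have hu1 : t * (1 - t) ≤ 1 / 4 := by nlinarith [sq_nonneg (t - 1 / 2)]
    have hsq : (t * (1 - t)) ^ 2 ≤ (1 / 4 : ℝ) ^ 2 := by
      apply pow_le_pow_left₀ hu0 hu1
    nlinarith [hsq]

theorem riemann_sum_estimate (x : ℝ) (n : ℕ) (hn : 4 ≤ n) :
    |∑ i ∈ Finset.range n, Htilde (Int.fract (x + i / n))| < 1 / 12 := by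
  have hn0 : 0 < n := by omega
  have hnR : (4 : ℝ) ≤ n := by exact_mod_cast hn
  have hnR0 : (0 : ℝ) < n := by linarith
  set f : ℝ := Int.fract x with hf
  have hf0 : 0 ≤ f := Int.fract_nonneg x
  have hf1 : f < 1 := Int.fract_lt_one x
  set r : ℝ := Int.fract (n * f) with hr
  have hr0 : 0 ≤ r := Int.fract_nonneg _
  have hr1 : r < 1 := Int.fract_lt_one _
  have hkf : 0 ≤ ⌊(n : ℝ) * f⌋ := Int.floor_nonneg.mpr (by positivity)
  set k : ℕ := (⌊(n : ℝ) * f⌋).toNat with hk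
  have hkcast : (k : ℝ) = ⌊(n : ℝ) * f⌋ := by
    rw [hk]; exact_mod_cast Int.toNat_of_nonneg hkf
  have hkr : (n : ℝ) * f = k + r := by
    rw [hkcast, hr]; exact (Int.floor_add_fract _).symm
  have hkn : k < n := by
    by_contra h
    push_neg at h
    have : (n : ℝ) ≤ (k : ℝ) := by exact_mod_cast h
    nlinarith
  -- fractional part computation
  have hfract : ∀ i : ℕ, Int.fract (x + i / n) = r / n + ((k + i) % n : ℕ) / n := by
    intro i
    have h1 : x + (i : ℝ) / n = (⌊x⌋ : ℝ) + (f + i / n) := by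
      rw [hf]; unfold Int.fract; ring
    rw [h1, Int.fract_intCast_add]
    have hq : k + i = n * ((k + i) / n) + (k + i) % n := (Nat.div_add_mod (k + i) n).symm
    set m : ℕ := (k + i) % n with hm
    have hmn : m < n := Nat.mod_lt _ hn0
    have h2 : f + (i : ℝ) / n = ((k + i : ℕ) / n : ℕ) + (m + r) / n := by
      have : f = ((k : ℝ) + r) / n := by field_simp [hnR0.ne'] at hkr ⊢; linarith
      rw [this]
      have hcast : ((k + i : ℕ) : ℝ) = n * (((k + i) / n : ℕ) : ℝ) + (m : ℝ) := by
        exact_mod_cast congrArg (Nat.cast : ℕ → ℝ) hq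
      push_cast at hcast ⊢
      field_simp
      linarith [hcast]
    rw [h2, Int.fract_natCast_add, Int.fract_eq_self.mpr]
    · ring
    constructor
    · positivity
    · rw [div_lt_one hnR0]
      have : (m : ℝ) ≤ (n : ℝ) - 1 := by
        have : (m : ℝ) + 1 ≤ n := by exact_mod_cast hmn
        linarith
      linarith
  simp_rw [hfract]
  have hreindex : ∑ i ∈ Finset.range n, Htilde (r / n + ((k + i) % n : ℕ) / n)
      = ∑ j ∈ Finset.range n, Htilde (r / n + j / n) := by
    apply Finset.sum_nbij' (fun i => (k + i) % n) (fun j => (j + (n - k)) % n)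
    · intro i _; exact Finset.mem_range.mpr (Nat.mod_lt _ hn0)
    · intro j _; exact Finset.mem_range.mpr (Nat.mod_lt _ hn0)
    · intro i hi
      simp only [Finset.mem_range] at hi
      rw [Nat.mod_add_mod]
      have : k + i + (n - k) = i + n := by omega
      rw [this, Nat.add_mod_right, Nat.mod_eq_of_lt hi]
    · intro j hj
      simp only [Finset.mem_range] at hj
      rw [Nat.add_mod_mod]
      have : k + (j + (n - k)) = j + n := by omega
      rw [this, Nat.add_mod_right, Nat.mod_eq_of_lt hj]
    · intro i _; rfl
  rw [hreindex]
  have hform : ∑ j ∈ Finset.range n, Htilde (r / n + j / n) = Htilde r / n ^ 3 := by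
    have := keysum n hn0 (r / n)
    rw [this, mul_div_cancel₀ _ hnR0.ne']
  rw [hform, abs_div, abs_of_pos (by positivity : (0:ℝ) < (n:ℝ) ^ 3)]
  have hbound := habs r hr0 hr1.le
  have hn3 : (64 : ℝ) ≤ (n : ℝ) ^ 3 := by
    have := pow_le_pow_left₀ (by norm_num : (0:ℝ) ≤ 4) hnR 3
    norm_num at this; linarith
  rw [div_lt_iff₀ (by positivity)]
  calc |Htilde r| ≤ 1 / 16 := hbound
    _ < 1 / 12 * 64 := by norm_num
    _ ≤ 1 / 12 * (n : ℝ) ^ 3 := by linarith
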